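/- Let K ≥ 1 be a real number and define F⁻ : (0,1) → ℝ by F⁻(r) = √( [K(2r−1) + (K+1)Δ(r) + 1] / (√(K+1) · Δ(r)) ). Then F⁻ is positive and differentiable on (0,1) and satisfies the transport equation F⁻′(r)/F⁻(r) = −(1/2)[Δ′(r)/Δ(r) + 1/(1−r) − 1/((1−r) Δ(r))] for all r ∈ (0,1). -/

import Mathlib

/-- The spectral gap `Δ(r) = √(1 - 4 K r (1-r)/(K+1))` of the restricted Grover Hamiltonian. -/
noncomputable def groverGap (K r : ℝ) : ℝ :=
  Real.sqrt (1 - 4 * K * r * (1 - r) / (K + 1))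

/-- The zeroth-order WKB amplitude
`F⁻(r) = √([K(2r-1) + (K+1)Δ(r) + 1] / (√(K+1) Δ(r)))`. -/
noncomputable def wkbFminus (K : ℝ) : ℝ → ℝ :=
  fun r => Real.sqrt ((K * (2 * r - 1) + (K + 1) * groverGap K r + 1) /
    (Real.sqrt (K + 1) * groverGap K r))

/-!
Write `x = 2r - 1`, `u = K x + 1` and `N = u + (K+1) Δ` (`wkbNum`) for the numerator of `F⁻²`.
Everything rests on `(K+1) Δ² = K x² + 1`: it gives `Δ′ = 2 K x / ((K+1) Δ)` and the
conjugate identity `N ((K+1) Δ - u) = K (2 (1-r))²`, which makes `N` positive, and it turns the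
logarithmic derivative of `N` into `1/((1-r) Δ) - 1/(1-r)`. Since `F⁻ = √(N / (√(K+1) Δ))`,
halving `N′/N - Δ′/Δ` is the transport equation.
-/

open Real

theorem logDeriv_sqrt {f : ℝ → ℝ} {x : ℝ} (hf : 0 < f x) (hdf : DifferentiableAt ℝ f x) :
    logDeriv (fun y => √(f y)) x = logDeriv f x / 2 := by
  rw [logDeriv_apply, logDeriv_apply, (hdf.hasDerivAt.sqrt hf.ne').deriv]
  have := (sqrt_pos.mpr hf).ne'
  field_simp
  rw [sq_sqrt hf.le]

section Grover

variable {K : ℝ}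

theorem groverGap_radicand_pos (hK : 0 ≤ K) (r : ℝ) :
    0 < 1 - 4 * K * r * (1 - r) / (K + 1) := by
  rw [sub_pos, div_lt_one (by linarith)]
  nlinarith [mul_nonneg hK (sq_nonneg (2 * r - 1))]

theorem groverGap_pos (hK : 0 ≤ K) (r : ℝ) : 0 < groverGap K r :=
  sqrt_pos.mpr (groverGap_radicand_pos hK r)

theorem add_one_mul_groverGap_sq (hK : 0 ≤ K) (r : ℝ) :
    (K + 1) * groverGap K r ^ 2 = K * (2 * r - 1) ^ 2 + 1 := by
  rw [groverGap, sq_sqrt (groverGap_radicand_pos hK r).le]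
  field_simp
  ring

theorem hasDerivAt_groverGap (hK : 0 ≤ K) (r : ℝ) :
    HasDerivAt (groverGap K) (2 * K * (2 * r - 1) / ((K + 1) * groverGap K r)) r := by
  have hradicand : HasDerivAt (fun x : ℝ => 1 - 4 * K * x * (1 - x) / (K + 1))
      (4 * K * (2 * r - 1) / (K + 1)) r := by
    have := ((((hasDerivAt_id r).const_mul (4 * K)).mul
      ((hasDerivAt_id r).const_sub 1)).div_const (K + 1)).const_sub 1
    exact this.congr_deriv (by simp only [id]; ring)
  refine (hradicand.sqrt (groverGap_radicand_pos hK r).ne').congr_deriv ?_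
  change _ / (2 * groverGap K r) = _
  have := (groverGap_pos hK r).ne'
  field_simp
  ring

noncomputable def wkbNum (K r : ℝ) : ℝ :=
  K * (2 * r - 1) + (K + 1) * groverGap K r + 1

theorem wkbNum_mul_conj (hK : 0 ≤ K) (r : ℝ) :
    wkbNum K r * ((K + 1) * groverGap K r - (K * (2 * r - 1) + 1)) = K * (2 * (1 - r)) ^ 2 := by
  unfold wkbNum
  linear_combination (K + 1) * add_one_mul_groverGap_sq hK r

theorem wkbNum_pos (hK : 0 ≤ K) (r : ℝ) : 0 < wkbNum K r := by
  have hΔ := groverGap_pos hK r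
  have hconj := wkbNum_mul_conj hK r
  unfold wkbNum at *
  nlinarith [mul_pos (by linarith : (0 : ℝ) < K + 1) hΔ, mul_nonneg hK (sq_nonneg (2 * r - 1)),
    mul_nonneg hK (sq_nonneg (1 - r))]

theorem hasDerivAt_wkbNum (hK : 0 ≤ K) (r : ℝ) :
    HasDerivAt (wkbNum K) (2 * K * (groverGap K r + 2 * r - 1) / groverGap K r) r := by
  have hlin : HasDerivAt (fun x : ℝ => K * (2 * x - 1)) (2 * K) r := by
    simpa [mul_comm] using (((hasDerivAt_id r).const_mul 2).sub_const 1).const_mul K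
  refine ((hlin.add ((hasDerivAt_groverGap hK r).const_mul (K + 1))).add_const 1).congr_deriv ?_
  have := (groverGap_pos hK r).ne'
  have : K + 1 ≠ 0 := by linarith
  field_simp
  ring

theorem logDeriv_wkbNum (hK : 0 ≤ K) {r : ℝ} (hr : r ≠ 1) :
    logDeriv (wkbNum K) r = 1 / ((1 - r) * groverGap K r) - 1 / (1 - r) := by
  have hΔ := (groverGap_pos hK r).ne'
  have hN := (wkbNum_pos hK r).ne'
  have h1r : 1 - r ≠ 0 := sub_ne_zero.mpr hr.symm
  rw [logDeriv_apply, (hasDerivAt_wkbNum hK r).deriv, div_eq_iff hN]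
  field_simp
  unfold wkbNum
  linear_combination add_one_mul_groverGap_sq hK r

theorem wkbFminus_eq (K : ℝ) :
    wkbFminus K = fun r => √(wkbNum K r / (√(K + 1) * groverGap K r)) :=
  rfl

theorem wkbNum_div_pos (hK : 0 ≤ K) (r : ℝ) : 0 < wkbNum K r / (√(K + 1) * groverGap K r) :=
  div_pos (wkbNum_pos hK r) (mul_pos (sqrt_pos.mpr (by linarith)) (groverGap_pos hK r))

theorem differentiableAt_wkbNum_div (hK : 0 ≤ K) (r : ℝ) :
    DifferentiableAt ℝ (fun x => wkbNum K x / (√(K + 1) * groverGap K x)) r :=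
  (hasDerivAt_wkbNum hK r).differentiableAt.div
    ((hasDerivAt_groverGap hK r).differentiableAt.const_mul _)
    (mul_pos (sqrt_pos.mpr (by linarith)) (groverGap_pos hK r)).ne'

theorem wkbFminus_pos (hK : 0 ≤ K) (r : ℝ) : 0 < wkbFminus K r :=
  sqrt_pos.mpr (wkbNum_div_pos hK r)

theorem differentiableAt_wkbFminus (hK : 0 ≤ K) (r : ℝ) :
    DifferentiableAt ℝ (wkbFminus K) r :=
  (differentiableAt_wkbNum_div hK r).sqrt (wkbNum_div_pos hK r).ne'

theorem logDeriv_wkbFminus (hK : 0 ≤ K) {r : ℝ} (hr : r ≠ 1) :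
    logDeriv (wkbFminus K) r = -(1 / 2) * (logDeriv (groverGap K) r + 1 / (1 - r)
      - 1 / ((1 - r) * groverGap K r)) := by
  have hsqrt : √(K + 1) ≠ 0 := (sqrt_pos.mpr (by linarith)).ne'
  rw [wkbFminus_eq, logDeriv_sqrt (f := fun x => wkbNum K x / (√(K + 1) * groverGap K x))
      (wkbNum_div_pos hK r) (differentiableAt_wkbNum_div hK r),
    logDeriv_div (f := wkbNum K) (g := fun x => √(K + 1) * groverGap K x) r
      (wkbNum_pos hK r).ne' (mul_ne_zero hsqrt (groverGap_pos hK r).ne')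
      (hasDerivAt_wkbNum hK r).differentiableAt
      ((hasDerivAt_groverGap hK r).differentiableAt.const_mul _),
    logDeriv_const_mul (f := groverGap K) r _ hsqrt, logDeriv_wkbNum hK hr]
  ring

end Grover

/-- `F⁻` is positive and differentiable on `(0,1)` and satisfies the transport
equation `F⁻′/F⁻ = -(1/2)[Δ′/Δ + 1/(1-r) - 1/((1-r)Δ)]`. -/
theorem grover_wkb_Fminus_transport (K : ℝ) (hK : 1 ≤ K) :
    ∀ r ∈ Set.Ioo (0 : ℝ) 1,
      0 < wkbFminus K r
      ∧ DifferentiableAt ℝ (wkbFminus K) r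
      ∧ deriv (wkbFminus K) r / wkbFminus K r
          = -(1 / 2) * (deriv (groverGap K) r / groverGap K r + 1 / (1 - r)
              - 1 / ((1 - r) * groverGap K r)) := by
  rintro r ⟨-, hr1⟩
  have hK0 : 0 ≤ K := by linarith
  exact ⟨wkbFminus_pos hK0 r, differentiableAt_wkbFminus hK0 r, logDeriv_wkbFminus hK0 hr1.ne⟩
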